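/- For every odd n = 2k+1, the set D consisting of all positions (i,j) in an n × n array with i ≤ k and j ≥ n − k + i, together with all positions with i ≥ k + 2 and j ≤ i − k − 1, is a dynamic monopoly of Kₙ □ Kₙ with threshold n − 1 at every vertex, and |D| = (n² − 1)/4. -/

import Mathlib

/-!
Put the centre of the grid at `(k, k)`. Every vertex has `4k` neighbours and threshold `2k`, and
`D` is exactly the set of points `(i, j)` with `|i - j| > k`. After `t` rounds, `D` together with
every point at ℓ¹-distance at least `2k + 1 - t` from the centre is active: a point at distance
`2k - t` sees on its row the `2 (k - |j - k|)` points farther from the centre and the `|i - k|`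
points of `D`, which together number at least `k - |j - k| + max (k - |j - k|) |i - k|`; adding
the symmetric column count always gives at least `2k`. Counting `D` row by row gives
`∑ |i - k| = k (k + 1) = (n² - 1) / 4`.
-/

open SimpleGraph

/-- One step of the irreversible activation process: every vertex with at least `τ v`
active neighbors becomes active, and active vertices stay active. -/
def activationStep {V : Type*} (G : SimpleGraph V) (τ : V → ℕ) (A : Set V) : Set V :=
  A ∪ {v | τ v ≤ (G.neighborSet v ∩ A).ncard}

/-- `D` is a dynamic monopoly (dynamo) of `(G, τ)`: iterating the activation process
starting from `D` eventually activates all vertices. -/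
def IsDynamo {V : Type*} (G : SimpleGraph V) (τ : V → ℕ) (D : Set V) : Prop :=
  ∃ j : ℕ, (activationStep G τ)^[j] D = Set.univ

/-- `K` is (the vertex set of) a resistant subgraph of `(G, τ)`:
every vertex `v` of `K` satisfies `d_K(v) ≥ d_G(v) − τ(v) + 1` (as integers). -/
def IsResistant {V : Type*} (G : SimpleGraph V) (τ : V → ℕ) (K : Set V) : Prop :=
  K.Nonempty ∧ ∀ v ∈ K, (G.neighborSet v).ncard + 1 ≤ (G.neighborSet v ∩ K).ncard + τ v

/-- The minimum size of a dynamic monopoly of `(G, τ)`. -/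
noncomputable def dyn {V : Type*} (G : SimpleGraph V) (τ : V → ℕ) : ℕ :=
  sInf {k : ℕ | ∃ D : Set V, D.ncard = k ∧ IsDynamo G τ D}

section ActivationProcess

variable {V : Type*} (G : SimpleGraph V) (τ : V → ℕ)

theorem activationStep_mono [Finite V] : Monotone (activationStep G τ) :=
  fun _ _ hAB => Set.union_subset_union hAB fun _ hv =>
    hv.trans (Set.ncard_le_ncard (Set.inter_subset_inter_right _ hAB) (Set.toFinite _))

theorem isDynamo_of_subset_activationStep [Finite V] {D : Set V} (S : ℕ → Set V) (T : ℕ)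
    (h₀ : S 0 ⊆ D) (hS : ∀ t, S (t + 1) ⊆ activationStep G τ (S t)) (hT : S T = Set.univ) :
    IsDynamo G τ D :=
  ⟨T, Set.eq_univ_of_univ_subset <| hT ▸
    (activationStep_mono G τ).seq_le_seq T h₀ (fun t _ => hS t)
      fun t _ => (Function.iterate_succ_apply' _ t D).ge⟩

end ActivationProcess

theorem ncard_neighborSet_boxProd_top_inter {V W : Type*} [Finite V] [Finite W]
    {A : Set (V × W)} {v : V × W} (hv : v ∉ A) :
    (((⊤ : SimpleGraph V) □ (⊤ : SimpleGraph W)).neighborSet v ∩ A).ncard =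
      {w | (v.1, w) ∈ A}.ncard + {u | (u, v.2) ∈ A}.ncard := by
  have hsplit : ((⊤ : SimpleGraph V) □ (⊤ : SimpleGraph W)).neighborSet v ∩ A =
      Prod.mk v.1 '' {w | (v.1, w) ∈ A} ∪ (fun u => (u, v.2)) '' {u | (u, v.2) ∈ A} := by
    ext ⟨u, w⟩
    simp only [Set.mem_inter_iff, mem_neighborSet, boxProd_adj, top_adj, Set.mem_union,
      Set.mem_image, Set.mem_ofPred_eq, Prod.mk.injEq]
    constructor
    · rintro ⟨⟨-, rfl⟩ | ⟨-, rfl⟩, hA⟩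
      exacts [Or.inr ⟨u, hA, rfl, rfl⟩, Or.inl ⟨w, hA, rfl, rfl⟩]
    · rintro (⟨w, hA, rfl, rfl⟩ | ⟨u, hA, rfl, rfl⟩)
      · exact ⟨Or.inr ⟨fun h => hv (by rwa [← h] at hA), rfl⟩, hA⟩
      · exact ⟨Or.inl ⟨fun h => hv (by rwa [← h] at hA), rfl⟩, hA⟩
  have hdisj : Disjoint (Prod.mk v.1 '' {w | (v.1, w) ∈ A})
      ((fun u => (u, v.2)) '' {u | (u, v.2) ∈ A}) := by
    rw [Set.disjoint_left]
    rintro _ ⟨w, -, rfl⟩ ⟨u, hA, huw⟩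
    obtain ⟨rfl, rfl⟩ := Prod.mk.inj huw
    exact hv hA
  rw [hsplit, Set.ncard_union_eq hdisj, Set.ncard_image_of_injective _ (Prod.mk_right_injective _),
    Set.ncard_image_of_injective _ (Prod.mk_left_injective _)]

theorem ncard_setOf_fin_lt_or_le {n a b : ℕ} (hab : a ≤ b) (ha : a ≤ n) :
    {w : Fin n | (w : ℕ) < a ∨ b ≤ w}.ncard = a + (n - b) := by
  classical
  have hcompl := Finset.card_filter_add_card_filter_not (s := Finset.univ)
    (fun w : Fin n => (w : ℕ) < b)
  simp only [not_lt, Fin.card_filter_val_lt, Finset.card_univ, Fintype.card_fin] at hcompl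
  rw [Set.ncard_eq_toFinset_card', Set.toFinset_ofPred, Finset.filter_or,
    Finset.card_union_of_disjoint, Fin.card_filter_val_lt]
  · omega
  · exact Finset.disjoint_filter.2 fun w _ hw => by omega

theorem add_sub_le_ncard_of_forall_lt_or_le {n a b : ℕ} {S : Set (Fin n)} (hab : a ≤ b)
    (ha : a ≤ n) (hS : ∀ w : Fin n, (w : ℕ) < a ∨ b ≤ w → w ∈ S) : a + (n - b) ≤ S.ncard :=
  ncard_setOf_fin_lt_or_le hab ha ▸ Set.ncard_le_ncard (fun w => hS w) (Set.toFinite S)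

theorem ncard_setOf_prod {α β : Type*} [Fintype α] [Fintype β] (P : α → β → Prop) :
    {p : α × β | P p.1 p.2}.ncard = ∑ a, {b | P a b}.ncard := by
  classical
  simp only [Set.ncard_eq_toFinset_card', Set.toFinset_ofPred, Finset.card_filter,
    Fintype.sum_prod_type]

theorem sum_range_two_mul_add_one_dist (k : ℕ) :
    ∑ i ∈ Finset.range (2 * k + 1), Nat.dist i k = k * (k + 1) := by
  induction k with
  | zero => simp
  | succ k ih =>
    rw [show 2 * (k + 1) + 1 = 2 * k + 1 + 1 + 1 by ring, Finset.sum_range_succ',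
      Finset.sum_range_succ]
    simp only [Nat.dist_add_add_right, Nat.dist_zero_left, ih]
    rw [Nat.dist_comm, Nat.dist_eq_sub_of_le (by omega), show 2 * k + 1 - k = k + 1 by omega]
    ring

section CenteredGrid

variable {n : ℕ}

def farFromDiag (k : ℕ) : Set (Fin n × Fin n) :=
  {p | (p.1 : ℕ) + k < p.2 ∨ (p.2 : ℕ) + k < p.1}

def activeAt (k t : ℕ) : Set (Fin n × Fin n) :=
  farFromDiag k ∪ {p | 2 * k + 1 ≤ Nat.dist p.1 k + Nat.dist p.2 k + t}

theorem activeAt_zero_subset {k : ℕ} (hn : n = 2 * k + 1) :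
    (activeAt k 0 : Set (Fin n × Fin n)) ⊆ farFromDiag k := by
  rintro ⟨i, j⟩ (h | h)
  · exact h
  · simp only [Set.mem_ofPred_eq, Nat.dist] at h
    omega

theorem activeAt_two_mul_add_one (k : ℕ) :
    (activeAt k (2 * k + 1) : Set (Fin n × Fin n)) = Set.univ :=
  Set.eq_univ_of_forall fun _ => Or.inr (Nat.le_add_left _ _)

theorem swap_mem_activeAt {k t : ℕ} {p : Fin n × Fin n} :
    p.swap ∈ activeAt k t ↔ p ∈ activeAt k t := by
  simp only [activeAt, farFromDiag, Set.mem_union, Set.mem_ofPred_eq, Prod.fst_swap,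
    Prod.snd_swap, or_comm (a := (p.2 : ℕ) + k < p.1), add_comm (Nat.dist p.2 k)]

theorem le_ncard_row_activeAt {k t : ℕ} (hn : n = 2 * k + 1) (x y : Fin n)
    (hxy : 2 * k ≤ Nat.dist x k + Nat.dist y k + t) :
    k - Nat.dist y k + max (k - Nat.dist y k) (Nat.dist x k) ≤
      {w | (x, w) ∈ activeAt k t}.ncard := by
  -- off the window, a point of the row is farther from the centre than `y`, or lies in `D`
  have hwindow := add_sub_le_ncard_of_forall_lt_or_le
    (a := max (k - Nat.dist y k) (x - k)) (b := min (k + Nat.dist y k + 1) (x + k + 1))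
    (S := {w | (x, w) ∈ activeAt k t}) (by simp only [Nat.dist]; omega) (by omega) fun w hw => by
      simp only [activeAt, farFromDiag, Set.mem_union, Set.mem_ofPred_eq, Nat.dist] at hw hxy ⊢
      omega
  simp only [Nat.dist] at hwindow ⊢
  omega

theorem activeAt_succ_subset {k : ℕ} (hn : n = 2 * k + 1) (t : ℕ) :
    (activeAt k (t + 1) : Set (Fin n × Fin n)) ⊆
      activationStep (⊤ □ ⊤) (fun _ => n - 1) (activeAt k t) := by
  rintro ⟨i, j⟩ hv
  by_cases hA : (i, j) ∈ activeAt k t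
  · exact Or.inl hA
  have hlevel : 2 * k ≤ Nat.dist i k + Nat.dist j k + t := by
    simp only [activeAt, farFromDiag, Set.mem_union, Set.mem_ofPred_eq] at hv hA
    omega
  have hrow := le_ncard_row_activeAt hn i j hlevel
  have hcol := le_ncard_row_activeAt hn j i (t := t) (by omega)
  rw [show {w | (j, w) ∈ activeAt k t} = {u | (u, j) ∈ activeAt k t} from
    Set.ext fun u => swap_mem_activeAt (p := (u, j))] at hcol
  refine Or.inr ?_
  simp only [Set.mem_ofPred_eq]
  rw [ncard_neighborSet_boxProd_top_inter hA]
  simp only [Nat.dist] at hrow hcol ⊢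
  omega

theorem ncard_farFromDiag {k : ℕ} (hn : n = 2 * k + 1) :
    (farFromDiag k : Set (Fin n × Fin n)).ncard = k * (k + 1) := by
  have hrow (i : Fin n) :
      {j : Fin n | (i : ℕ) + k < j ∨ (j : ℕ) + k < i}.ncard = Nat.dist i k := by
    have hwindow : {j : Fin n | (i : ℕ) + k < j ∨ (j : ℕ) + k < i} =
        {j : Fin n | (j : ℕ) < i - k ∨ i + k + 1 ≤ j} :=
      Set.ext fun j => by simp only [Set.mem_ofPred_eq]; omega
    rw [hwindow, ncard_setOf_fin_lt_or_le (by omega) (by omega), Nat.dist]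
    omega
  rw [farFromDiag, ncard_setOf_prod fun i j : Fin n => (i : ℕ) + k < j ∨ (j : ℕ) + k < i]
  simp only [hrow]
  subst hn
  rw [Fin.sum_univ_eq_sum_range (fun i => Nat.dist i k), sum_range_two_mul_add_one_dist]

end CenteredGrid

/-- For odd `n = 2k+1`, the union of the top-right and bottom-left triangular subarrays
(1-indexed positions `(i,j)` with `i ≤ k ∧ j ≥ n − k + i`, or `i ≥ k + 2 ∧ j ≤ i − k − 1`)
is a dynamic monopoly of `Kₙ □ Kₙ` with threshold `n − 1`, of size `(n² − 1)/4`. -/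
theorem stmt18 (n k : ℕ) (hn : n = 2 * k + 1) :
    IsDynamo ((⊤ : SimpleGraph (Fin n)) □ (⊤ : SimpleGraph (Fin n))) (fun _ => n - 1)
        {p : Fin n × Fin n |
          ((p.1 : ℕ) + 1 ≤ k ∧ n + ((p.1 : ℕ) + 1) ≤ ((p.2 : ℕ) + 1) + k) ∨
          (k + 2 ≤ (p.1 : ℕ) + 1 ∧ ((p.2 : ℕ) + 1) + k + 1 ≤ (p.1 : ℕ) + 1)} ∧
      ({p : Fin n × Fin n |
          ((p.1 : ℕ) + 1 ≤ k ∧ n + ((p.1 : ℕ) + 1) ≤ ((p.2 : ℕ) + 1) + k) ∨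
          (k + 2 ≤ (p.1 : ℕ) + 1 ∧ ((p.2 : ℕ) + 1) + k + 1 ≤ (p.1 : ℕ) + 1)}).ncard
        = (n ^ 2 - 1) / 4 := by
  have hD : {p : Fin n × Fin n |
      ((p.1 : ℕ) + 1 ≤ k ∧ n + ((p.1 : ℕ) + 1) ≤ ((p.2 : ℕ) + 1) + k) ∨
      (k + 2 ≤ (p.1 : ℕ) + 1 ∧ ((p.2 : ℕ) + 1) + k + 1 ≤ (p.1 : ℕ) + 1)} = farFromDiag k := by
    ext ⟨i, j⟩
    simp only [farFromDiag, Set.mem_ofPred_eq]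
    omega
  rw [hD, ncard_farFromDiag hn]
  refine ⟨isDynamo_of_subset_activationStep _ _ (activeAt k) (2 * k + 1) (activeAt_zero_subset hn)
    (activeAt_succ_subset hn) (activeAt_two_mul_add_one k), ?_⟩
  have hsq : n ^ 2 = 4 * (k * (k + 1)) + 1 := by subst hn; ring
  omega
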